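/- arXiv:2510.06835 — 3 statements merged into one kernel-verified Lean document; each statement's English description precedes it below -/
import Mathlib

section
/- If A ⊆ ℝ^d is a finite set with |A| ≥ n(d+1)+1 for some nonnegative integer n, then the intersection of the convex hulls of all subsets of A of cardinality |A| − n is nonempty. -/
theorem stmt_0 (d n : ℕ) (A : Finset (EuclideanSpace ℝ (Fin d)))
    (hcard : n * (d + 1) + 1 ≤ A.card) :
    (⋂ S ∈ {S : Finset (EuclideanSpace ℝ (Fin d)) | S ⊆ A ∧ S.card = A.card - n},
      convexHull ℝ (S : Set (EuclideanSpace ℝ (Fin d)))).Nonempty := by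
  classical
  have hset : {S : Finset (EuclideanSpace ℝ (Fin d)) | S ⊆ A ∧ S.card = A.card - n}
      = ↑(A.powersetCard (A.card - n)) := by
    ext S; simp [Finset.mem_powersetCard]
  rw [hset, Finset.set_biInter_coe]
  have hrank : Module.finrank ℝ (EuclideanSpace ℝ (Fin d)) = d := by
    simp [finrank_euclideanSpace]
  apply Convex.helly_theorem' (𝕜 := ℝ)
  · intro S _; exact convex_convexHull ℝ _
  · intro I hI hIcard
    rw [hrank] at hIcard
    -- find a common point of all S ∈ I
    have hn : n ≤ A.card := by nlinarith
    have hsub : (I.biUnion (fun S => A \ S)).card ≤ I.card * n := by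
      calc (I.biUnion (fun S => A \ S)).card ≤ ∑ S ∈ I, (A \ S).card :=
            Finset.card_biUnion_le
        _ ≤ ∑ _S ∈ I, n := by
            apply Finset.sum_le_sum
            intro S hS
            have := hI hS
            rw [Finset.mem_powersetCard] at this
            rw [Finset.card_sdiff_of_subset this.1, this.2]
            omega
        _ = I.card * n := by simp [Finset.sum_const, Nat.mul_comm]
    have hlt : (I.biUnion (fun S => A \ S)).card < A.card := by
      calc (I.biUnion (fun S => A \ S)).card ≤ I.card * n := hsub
        _ ≤ (d + 1) * n := Nat.mul_le_mul_right n hIcard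
        _ < A.card := by nlinarith
    have hne : (A \ I.biUnion (fun S => A \ S)).Nonempty := by
      rw [← Finset.card_pos]
      have := Finset.le_card_sdiff (I.biUnion (fun S => A \ S)) A
      omega
    obtain ⟨a, ha⟩ := hne
    rw [Finset.mem_sdiff] at ha
    refine ⟨a, Set.mem_iInter₂.mpr fun S hS => ?_⟩
    have haS : a ∈ S := by
      by_contra hc
      exact ha.2 (Finset.mem_biUnion.mpr ⟨S, hS, Finset.mem_sdiff.mpr ⟨ha.1, hc⟩⟩)
    exact subset_convexHull ℝ (S : Set (EuclideanSpace ℝ (Fin d))) haS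
end

section
/- The set of N×N Sarymsakov matrices is closed under matrix multiplication: if A and B are row-stochastic Sarymsakov matrices, then AB is a Sarymsakov matrix. -/
open Finset
open scoped Classical

/-- A matrix is row-stochastic if it has nonnegative entries and each row sums to 1. -/
def RowStochastic {N : ℕ} (A : Matrix (Fin N) (Fin N) ℝ) : Prop :=
  (∀ i j, 0 ≤ A i j) ∧ ∀ i, ∑ j, A i j = 1

/-- The one-stage consequent indices `I_A(S) = { j : a_{ij} > 0 for some i ∈ S }`. -/
noncomputable def consequent {N : ℕ} (A : Matrix (Fin N) (Fin N) ℝ)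
    (S : Finset (Fin N)) : Finset (Fin N) :=
  Finset.univ.filter (fun j => ∃ i ∈ S, 0 < A i j)

/-- The Sarymsakov property of a row-stochastic matrix. -/
def Sarymsakov {N : ℕ} (A : Matrix (Fin N) (Fin N) ℝ) : Prop :=
  ∀ V₁ V₂ : Finset (Fin N), V₁.Nonempty → V₂.Nonempty → Disjoint V₁ V₂ →
    (consequent A V₁ ∩ consequent A V₂).Nonempty ∨
    ((consequent A V₁ ∩ consequent A V₂ = ∅) ∧
      (V₁ ∪ V₂).card < (consequent A V₁ ∪ consequent A V₂).card)

lemma conseq_mono {N : ℕ} (A : Matrix (Fin N) (Fin N) ℝ) {S T : Finset (Fin N)}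
    (h : S ⊆ T) : consequent A S ⊆ consequent A T := by
  intro j hj
  simp only [consequent, mem_filter, mem_univ, true_and] at hj ⊢
  obtain ⟨i, hi, hpos⟩ := hj
  exact ⟨i, h hi, hpos⟩

lemma conseq_nonempty {N : ℕ} {A : Matrix (Fin N) (Fin N) ℝ} (hA : RowStochastic A)
    {S : Finset (Fin N)} (hS : S.Nonempty) : (consequent A S).Nonempty := by
  obtain ⟨i, hi⟩ := hS
  have h1 : ∑ j, A i j = 1 := hA.2 i
  have : ∃ j, 0 < A i j := by
    by_contra h
    push_neg at h
    have : ∑ j, A i j = 0 := Finset.sum_eq_zero fun j _ => le_antisymm (h j) (hA.1 i j)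
    rw [this] at h1; norm_num at h1
  obtain ⟨j, hj⟩ := this
  exact ⟨j, by simp only [consequent, mem_filter, mem_univ, true_and]; exact ⟨i, hi, hj⟩⟩

lemma conseq_mul {N : ℕ} {A B : Matrix (Fin N) (Fin N) ℝ} (hA : RowStochastic A)
    (hB : RowStochastic B) (S : Finset (Fin N)) :
    consequent (A * B) S = consequent B (consequent A S) := by
  ext j
  simp only [consequent, mem_filter, mem_univ, true_and]
  constructor
  · rintro ⟨i, hi, hpos⟩
    rw [Matrix.mul_apply] at hpos
    have : ∃ k ∈ Finset.univ, 0 < A i k * B k j := by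
      by_contra h
      push_neg at h
      have : ∑ k, A i k * B k j ≤ 0 := Finset.sum_nonpos fun k hk => h k hk
      linarith
    obtain ⟨k, _, hk⟩ := this
    have hak : 0 < A i k := by
      rcases lt_or_eq_of_le (hA.1 i k) with h | h
      · exact h
      · rw [← h] at hk; simp at hk
    have hbk : 0 < B k j := by
      rcases lt_or_eq_of_le (hB.1 k j) with h | h
      · exact h
      · rw [← h] at hk; simp at hk
    exact ⟨k, ⟨i, hi, hak⟩, hbk⟩
  · rintro ⟨k, ⟨i, hi, hak⟩, hbk⟩
    refine ⟨i, hi, ?_⟩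
    rw [Matrix.mul_apply]
    have : 0 < A i k * B k j := mul_pos hak hbk
    calc (0:ℝ) < A i k * B k j := this
      _ ≤ ∑ k, A i k * B k j :=
        Finset.single_le_sum (fun l _ => mul_nonneg (hA.1 i l) (hB.1 l j)) (mem_univ k)

theorem stmt_5 {N : ℕ} (A B : Matrix (Fin N) (Fin N) ℝ)
    (hA : RowStochastic A) (hB : RowStochastic B)
    (hAs : Sarymsakov A) (hBs : Sarymsakov B) :
    Sarymsakov (A * B) := by
  intro V₁ V₂ h₁ h₂ hdisj
  rw [conseq_mul hA hB, conseq_mul hA hB]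
  set W₁ := consequent A V₁
  set W₂ := consequent A V₂
  have hW₁ : W₁.Nonempty := conseq_nonempty hA h₁
  have hW₂ : W₂.Nonempty := conseq_nonempty hA h₂
  by_cases hint : (W₁ ∩ W₂).Nonempty
  · left
    obtain ⟨j, hj⟩ := conseq_nonempty hB hint
    exact ⟨j, mem_inter.2 ⟨conseq_mono B (inter_subset_left) hj,
      conseq_mono B (inter_subset_right) hj⟩⟩
  · have hWdisj : Disjoint W₁ W₂ := by
      rw [Finset.disjoint_iff_inter_eq_empty, ← Finset.not_nonempty_iff_eq_empty]
      exact hint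
    have hcard : (V₁ ∪ V₂).card < (W₁ ∪ W₂).card := by
      rcases hAs V₁ V₂ h₁ h₂ hdisj with h | ⟨_, h⟩
      · exact absurd h hint
      · exact h
    rcases hBs W₁ W₂ hW₁ hW₂ hWdisj with h | ⟨he, hc⟩
    · exact Or.inl h
    · exact Or.inr ⟨he, lt_trans hcard hc⟩
end

section
/- Let A be a row-stochastic matrix whose positive entries correspond to the edges of a digraph G, and suppose every vertex i of G has a self-loop (a_{ii} > 0). If G is ((d+1)F+1)-robust with (d+1)F+1 ≥ 2, then A is a Sarymsakov matrix. -/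
open Finset
open scoped Classical

/-- The in-neighbors of `i` lying outside the set `S`. -/
noncomputable def inNbrsOutside {N : ℕ} (adj : Fin N → Fin N → Prop) (i : Fin N)
    (S : Finset (Fin N)) : Finset (Fin N) :=
  Finset.univ.filter (fun j => adj i j ∧ j ∉ S)

/-- `r`-robustness of a digraph. -/
def RRobust {N : ℕ} (adj : Fin N → Fin N → Prop) (r : ℕ) : Prop :=
  ∀ V₁ V₂ : Finset (Fin N), V₁.Nonempty → V₂.Nonempty → Disjoint V₁ V₂ →
    V₁ ≠ Finset.univ → V₂ ≠ Finset.univ →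
    (∃ i ∈ V₁, r ≤ (inNbrsOutside adj i V₁).card) ∨
    (∃ i ∈ V₂, r ≤ (inNbrsOutside adj i V₂).card)

theorem stmt_6 {N : ℕ} (A : Matrix (Fin N) (Fin N) ℝ)
    (adj : Fin N → Fin N → Prop) (d F : ℕ)
    (hA : RowStochastic A)
    (hedges : ∀ i j, 0 < A i j ↔ adj i j)
    (hself : ∀ i, 0 < A i i)
    (hr2 : 2 ≤ (d + 1) * F + 1)
    (hrob : RRobust adj ((d + 1) * F + 1)) :
    Sarymsakov A := by
  intro V₁ V₂ h1 h2 hdisj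
  by_cases hC : (consequent A V₁ ∩ consequent A V₂).Nonempty
  · exact Or.inl hC
  · right
    have hCe : consequent A V₁ ∩ consequent A V₂ = ∅ :=
      Finset.not_nonempty_iff_eq_empty.mp hC
    refine ⟨hCe, ?_⟩
    have hsub : ∀ (S : Finset (Fin N)), S ⊆ consequent A S := by
      intro S x hx
      simp only [consequent, Finset.mem_filter, Finset.mem_univ, true_and]
      exact ⟨x, hx, hself x⟩
    have hunion : V₁ ∪ V₂ ⊆ consequent A V₁ ∪ consequent A V₂ :=
      Finset.union_subset_union (hsub V₁) (hsub V₂)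
    have hn1 : V₁ ≠ Finset.univ := by
      intro h; obtain ⟨x, hx⟩ := h2
      exact (Finset.disjoint_left.mp hdisj (h ▸ Finset.mem_univ x)) hx
    have hn2 : V₂ ≠ Finset.univ := by
      intro h; obtain ⟨x, hx⟩ := h1
      exact (Finset.disjoint_right.mp hdisj (h ▸ Finset.mem_univ x)) hx
    -- key: produce j in (C₁ ∪ C₂) \ (V₁ ∪ V₂)
    have key : ∃ j, j ∈ consequent A V₁ ∪ consequent A V₂ ∧ j ∉ V₁ ∪ V₂ := by
      have hdisjC : Disjoint (consequent A V₁) (consequent A V₂) :=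
        Finset.disjoint_iff_inter_eq_empty.mpr hCe
      rcases hrob V₁ V₂ h1 h2 hdisj hn1 hn2 with ⟨i, hi, hcard⟩ | ⟨i, hi, hcard⟩
      · have hne : (inNbrsOutside adj i V₁).Nonempty := by
          rw [← Finset.card_pos]; omega
        obtain ⟨j, hj⟩ := hne
        simp only [inNbrsOutside, Finset.mem_filter, Finset.mem_univ, true_and] at hj
        obtain ⟨hadj, hjn⟩ := hj
        have hjC1 : j ∈ consequent A V₁ := by
          simp only [consequent, Finset.mem_filter, Finset.mem_univ, true_and]
          exact ⟨i, hi, (hedges i j).mpr hadj⟩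
        refine ⟨j, Finset.mem_union_left _ hjC1, ?_⟩
        intro hmem
        rcases Finset.mem_union.mp hmem with h | h
        · exact hjn h
        · exact Finset.disjoint_left.mp hdisjC hjC1 (hsub V₂ h)
      · have hne : (inNbrsOutside adj i V₂).Nonempty := by
          rw [← Finset.card_pos]; omega
        obtain ⟨j, hj⟩ := hne
        simp only [inNbrsOutside, Finset.mem_filter, Finset.mem_univ, true_and] at hj
        obtain ⟨hadj, hjn⟩ := hj
        have hjC2 : j ∈ consequent A V₂ := by
          simp only [consequent, Finset.mem_filter, Finset.mem_univ, true_and]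
          exact ⟨i, hi, (hedges i j).mpr hadj⟩
        refine ⟨j, Finset.mem_union_right _ hjC2, ?_⟩
        intro hmem
        rcases Finset.mem_union.mp hmem with h | h
        · exact Finset.disjoint_right.mp hdisjC hjC2 (hsub V₁ h)
        · exact hjn h
    obtain ⟨j, hjC, hjV⟩ := key
    exact Finset.card_lt_card (Finset.ssubset_iff_of_subset hunion |>.mpr ⟨j, hjC, hjV⟩)
end
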